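/- arXiv:1703.04091 — 4 statements merged into one kernel-verified Lean document; each statement's English description precedes it below -/
import Mathlib

section
/- Let H be a complex Hilbert space. For a subspace W of H ⊕ H define its Γ-orthogonal subspace W† = {(u₁,u₂) ∈ H ⊕ H : ⟨u₂, v₁⟩ = ⟨u₁, v₂⟩ for all (v₁,v₂) ∈ W}. Then for any unitary U on H, the subspace W_U = {(u₁,u₂) : i(I + U)u₁ = (I - U)u₂} is maximally isotropic, i.e., W_U† = W_U. -/
/-!
With `c± (x, y) = y ± i x`, the Γ-form `⟪y, x'⟫ - ⟪x, y'⟫` equals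
`(⟪c₊ p, c₊ q⟫ - ⟪c₋ p, c₋ q⟫) / 2i`, and `W_U` is the graph condition `U (c₊ p) = c₋ p`.
Since `U` preserves inner products, `W_U` is isotropic. Conversely, the vectors
`q = (x - U x, i (x + U x))` lie in `W_U` and have `c₊ q = 2i x`, `c₋ q = 2i U x`, so for
`p ∈ W_U†` the vector `U (c₊ p) - c₋ p` is orthogonal to the range of `U`, which is all of `H`.
-/

local notation "⟪" x ", " y "⟫" => @inner ℂ _ _ x y

open Complex

namespace BoundarySpace

variable {H : Type*} [NormedAddCommGroup H] [InnerProductSpace ℂ H]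

/-- The Γ-orthogonal `W†` of `W ⊆ H ⊕ H`. -/
def gammaOrthogonal (W : Set (H × H)) : Set (H × H) :=
  {p | ∀ q ∈ W, ⟪p.2, q.1⟫ = ⟪p.1, q.2⟫}

/-- The subspace `W_U`. -/
def ofUnitary (U : H ≃ₗᵢ[ℂ] H) : Set (H × H) :=
  {p | I • (p.1 + U p.1) = p.2 - U p.2}

theorem mem_ofUnitary_iff (U : H ≃ₗᵢ[ℂ] H) (p : H × H) :
    p ∈ ofUnitary U ↔ U (p.2 + I • p.1) = p.2 - I • p.1 := by
  simp only [ofUnitary, Set.mem_ofPred_eq, map_add, map_smul]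
  constructor <;> intro h <;> linear_combination (norm := module) h

theorem inner_add_I_smul_sub_inner_sub_I_smul (x y x' y' : H) :
    ⟪y + I • x, y' + I • x'⟫ - ⟪y - I • x, y' - I • x'⟫ = 2 * I * (⟪y, x'⟫ - ⟪x, y'⟫) := by
  simp only [inner_add_left, inner_add_right, inner_sub_left, inner_sub_right,
    inner_smul_left, inner_smul_right, conj_I]
  ring

theorem ofUnitary_subset_gammaOrthogonal (U : H ≃ₗᵢ[ℂ] H) :
    ofUnitary U ⊆ gammaOrthogonal (ofUnitary U) := by
  intro p hp q hq
  rw [mem_ofUnitary_iff] at hp hq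
  have h := inner_add_I_smul_sub_inner_sub_I_smul p.1 p.2 q.1 q.2
  rw [← hp, ← hq, U.inner_map_map, sub_self, eq_comm, mul_eq_zero, sub_eq_zero] at h
  exact h.resolve_left (by simp)

theorem gammaOrthogonal_ofUnitary_subset (U : H ≃ₗᵢ[ℂ] H) :
    gammaOrthogonal (ofUnitary U) ⊆ ofUnitary U := by
  intro p hp
  rw [mem_ofUnitary_iff]
  have hq (x : H) : (x - U x, I • (x + U x)) ∈ ofUnitary U := by
    simp only [ofUnitary, Set.mem_ofPred_eq, map_sub, map_add, map_smul]
    module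
  have horth (x : H) : ⟪U (p.2 + I • p.1) - (p.2 - I • p.1), U x⟫ = 0 := by
    have h := inner_add_I_smul_sub_inner_sub_I_smul p.1 p.2 (x - U x) (I • (x + U x))
    rw [hp _ (hq x), sub_self, mul_zero] at h
    have hplus : I • (x + U x) + I • (x - U x) = (2 * I) • x := by module
    have hminus : I • (x + U x) - I • (x - U x) = (2 * I) • U x := by module
    rw [hplus, hminus, inner_smul_right, inner_smul_right, ← mul_sub, mul_eq_zero] at h
    rw [inner_sub_left, U.inner_map_map]
    exact h.resolve_left (by simp)
  have h0 := horth (U.symm (U (p.2 + I • p.1) - (p.2 - I • p.1)))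
  rw [U.apply_symm_apply, inner_self_eq_zero, sub_eq_zero] at h0
  exact h0

end BoundarySpace

open BoundarySpace in
theorem boundary_space_maximally_isotropic_general
    {H : Type*} [NormedAddCommGroup H] [InnerProductSpace ℂ H]
    (U : H ≃ₗᵢ[ℂ] H) :
    {p : H × H | ∀ q : H × H, Complex.I • (q.1 + U q.1) = q.2 - U q.2 →
        ⟪p.2, q.1⟫ = ⟪p.1, q.2⟫} =
      {p : H × H | Complex.I • (p.1 + U p.1) = p.2 - U p.2} :=
  (gammaOrthogonal_ofUnitary_subset U).antisymm (ofUnitary_subset_gammaOrthogonal U)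

/-- Let `H` be a complex Hilbert space.  For `W ⊆ H ⊕ H` let
`W† = {(u₁,u₂) : ⟨u₂, v₁⟩ = ⟨u₁, v₂⟩ for all (v₁,v₂) ∈ W}` be its `Γ`-orthogonal.
Then for any unitary `U` on `H`, the subspace
`W_U = {(u₁,u₂) : i (I + U) u₁ = (I - U) u₂}` is maximally isotropic: `W_U† = W_U`. -/
theorem boundary_space_maximally_isotropic
    {H : Type*} [NormedAddCommGroup H] [InnerProductSpace ℂ H] [CompleteSpace H]
    (U : H ≃ₗᵢ[ℂ] H) :
    {p : H × H | ∀ q : H × H, Complex.I • (q.1 + U q.1) = q.2 - U q.2 →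
        ⟪p.2, q.1⟫ = ⟪p.1, q.2⟫} =
      {p : H × H | Complex.I • (p.1 + U p.1) = p.2 - U p.2} :=
  boundary_space_maximally_isotropic_general U
end

section
/- Let H be a complex Hilbert space and W a closed subspace of H ⊕ H. If W is maximally isotropic (W = W†, where W† = {(u₁,u₂) : ⟨u₂,v₁⟩ = ⟨u₁,v₂⟩ for all (v₁,v₂) ∈ W}), then there exists a unitary operator U on H such that W = {(u₁,u₂) ∈ H ⊕ H : i(I + U)u₁ = (I - U)u₂}. -/
local notation "⟪" x ", " y "⟫" => @inner ℂ _ _ x y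

/-!
For `p ∈ W` isotropy makes `⟪p.1, p.2⟫` real, so `‖p.2 ± I • p.1‖² = ‖p.1‖² + ‖p.2‖²`.
Hence both Cayley maps `p ↦ p.2 ± I • p.1` are bounded below on `W`, which is closed as a
`Γ`-orthogonal, and maximality makes them onto: a vector `w` orthogonal to the range of
`p ↦ p.2 + c • p.1` gives `(w, c • w) ∈ W† = W`, and testing `w` against the image `2c • w` of
that pair forces `w = 0`. The unitary is `U = (p ↦ p.2 - I • p.1) ∘ (p ↦ p.2 + I • p.1)⁻¹`,
and `W` is the set of pairs it relates.
-/

open ComplexConjugate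

lemma Complex.conj_eq_neg_of_mul_self_eq_neg_one {c : ℂ} (hc : c * c = -1) : conj c = -c := by
  rcases mul_self_eq_mul_self_iff.1 (hc.trans Complex.I_mul_I.symm) with rfl | rfl <;> simp

lemma Complex.neg_I_mul_neg_I : -Complex.I * -Complex.I = -1 :=
  (neg_mul_neg _ _).trans Complex.I_mul_I

section

variable {H : Type*} [NormedAddCommGroup H] [InnerProductSpace ℂ H]

def gammaOrthogonal (W : Submodule ℂ (H × H)) : Set (H × H) :=
  {p | ∀ q ∈ W, ⟪p.2, q.1⟫ = ⟪p.1, q.2⟫}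

lemma isClosed_gammaOrthogonal (W : Submodule ℂ (H × H)) : IsClosed (gammaOrthogonal W) := by
  simp only [gammaOrthogonal, Set.ofPred_forall]
  exact isClosed_biInter fun q _ => isClosed_eq (by fun_prop) (by fun_prop)

def cayley (c : ℂ) : H × H →L[ℂ] H :=
  ContinuousLinearMap.snd ℂ H H + c • ContinuousLinearMap.fst ℂ H H

@[simp]
lemma cayley_apply (c : ℂ) (p : H × H) : cayley c p = p.2 + c • p.1 := rfl

def cayleyOn (W : Submodule ℂ (H × H)) (c : ℂ) : W →L[ℂ] H :=
  (cayley c).comp W.subtypeL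

@[simp]
lemma cayleyOn_apply (W : Submodule ℂ (H × H)) (c : ℂ) (p : W) : cayleyOn W c p = cayley c p :=
  rfl

lemma eq_of_cayley_eq {p q : H × H} (hI : cayley Complex.I p = cayley Complex.I q)
    (hnI : cayley (-Complex.I) p = cayley (-Complex.I) q) : p = q := by
  simp only [cayley_apply] at hI hnI
  have h₁ : (2 * Complex.I) • p.1 = (2 * Complex.I) • q.1 := by
    linear_combination (norm := module) hI - hnI
  have h₂ : (2 : ℂ) • p.2 = (2 : ℂ) • q.2 := by
    linear_combination (norm := module) hI + hnI
  exact Prod.ext (smul_right_injective H (by simp) h₁) (smul_right_injective H two_ne_zero h₂)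

section SquareRootOfMinusOne

variable {c : ℂ} (hc : c * c = -1)
include hc

lemma norm_cayley_sq {p : H × H} (hp : ⟪p.2, p.1⟫ = ⟪p.1, p.2⟫) :
    ‖cayley c p‖ ^ 2 = ‖p.1‖ ^ 2 + ‖p.2‖ ^ 2 := by
  have h : (⟪cayley c p, cayley c p⟫ : ℂ) = ⟪p.1, p.1⟫ + ⟪p.2, p.2⟫ := by
    simp only [cayley_apply, inner_add_left, inner_add_right, inner_smul_left,
      inner_smul_right, Complex.conj_eq_neg_of_mul_self_eq_neg_one hc]
    linear_combination c * hp - (⟪p.1, p.1⟫ : ℂ) * hc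
  simp only [inner_self_eq_norm_sq_to_K] at h
  exact_mod_cast h

lemma norm_le_norm_cayley {p : H × H} (hp : ⟪p.2, p.1⟫ = ⟪p.1, p.2⟫) :
    ‖p‖ ≤ ‖cayley c p‖ := by
  have h := norm_cayley_sq hc hp
  rw [Prod.norm_def, max_le_iff, ← sq_le_sq₀ (norm_nonneg _) (norm_nonneg _),
    ← sq_le_sq₀ (norm_nonneg _) (norm_nonneg _)]
  constructor <;> nlinarith [sq_nonneg ‖p.1‖, sq_nonneg ‖p.2‖]

variable {W : Submodule ℂ (H × H)}

lemma antilipschitz_cayleyOn (hiso : (W : Set (H × H)) ⊆ gammaOrthogonal W) :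
    AntilipschitzWith 1 (cayleyOn W c) :=
  ContinuousLinearMap.antilipschitz_of_bound _ fun p => by
    simpa using norm_le_norm_cayley hc (hiso p.2 p p.2)

lemma mem_gammaOrthogonal_of_mem_orthogonal_range {w : H}
    (hw : w ∈ (LinearMap.range (cayleyOn W c : W →ₗ[ℂ] H))ᗮ) :
    (w, c • w) ∈ gammaOrthogonal W := by
  have hconj := Complex.conj_eq_neg_of_mul_self_eq_neg_one hc
  intro q hq
  have h : ⟪cayley c q, w⟫ = 0 := (Submodule.mem_orthogonal _ _).1 hw _
    (LinearMap.mem_range_self (cayleyOn W c : W →ₗ[ℂ] H) ⟨q, hq⟩)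
  rw [cayley_apply, inner_add_left, inner_smul_left, hconj] at h
  have h' := congrArg conj h
  simp only [map_add, map_mul, inner_conj_symm, map_neg, hconj, map_zero] at h'
  simp only [inner_smul_left, hconj]
  linear_combination -h'

variable [CompleteSpace H]

lemma cayleyOn_surjective (hmax : (W : Set (H × H)) = gammaOrthogonal W) :
    Function.Surjective (cayleyOn W c) := by
  have : CompleteSpace W := (hmax ▸ isClosed_gammaOrthogonal W).completeSpace_coe
  have := (antilipschitz_cayleyOn hc hmax.subset).completeSpace_range_clm
  refine (LinearMap.range_eq_top (f := (cayleyOn W c : W →ₗ[ℂ] H))).1 ?_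
  rw [← Submodule.orthogonal_eq_bot_iff, Submodule.eq_bot_iff]
  intro w hw
  have hmem : (w, c • w) ∈ W := by
    rw [← SetLike.mem_coe, hmax]
    exact mem_gammaOrthogonal_of_mem_orthogonal_range hc hw
  have h : ⟪cayley c (w, c • w), w⟫ = 0 := (Submodule.mem_orthogonal _ _).1 hw _
    (LinearMap.mem_range_self (cayleyOn W c : W →ₗ[ℂ] H) ⟨_, hmem⟩)
  simp only [cayley_apply, inner_add_left, inner_smul_left,
    Complex.conj_eq_neg_of_mul_self_eq_neg_one hc] at h
  have hc0 : c ≠ 0 := by rintro rfl; norm_num at hc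
  have h2 : (-(2 : ℂ) * c) * ⟪w, w⟫ = 0 := by linear_combination h
  exact inner_self_eq_zero.1 ((mul_eq_zero.1 h2).resolve_left (by simpa using hc0))

end SquareRootOfMinusOne

section CayleyTransform

variable {W : Submodule ℂ (H × H)}

lemma norm_cayley_neg_I (hiso : (W : Set (H × H)) ⊆ gammaOrthogonal W) {p : H × H}
    (hp : p ∈ W) : ‖cayley (-Complex.I) p‖ = ‖cayley Complex.I p‖ := by
  have hp' := hiso hp p hp
  rw [← sq_eq_sq₀ (norm_nonneg _) (norm_nonneg _), norm_cayley_sq Complex.neg_I_mul_neg_I hp',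
    norm_cayley_sq Complex.I_mul_I hp']

variable [CompleteSpace H] (hmax : (W : Set (H × H)) = gammaOrthogonal W)

noncomputable def cayleyEquiv : W ≃ₗ[ℂ] H :=
  LinearEquiv.ofBijective (cayleyOn W Complex.I)
    ⟨(antilipschitz_cayleyOn Complex.I_mul_I hmax.subset).injective,
      cayleyOn_surjective Complex.I_mul_I hmax⟩

lemma cayleyEquiv_apply (p : W) : cayleyEquiv hmax p = cayley Complex.I p := rfl

noncomputable def cayleyTransform : H ≃ₗᵢ[ℂ] H :=
  LinearIsometryEquiv.ofSurjective
    { toLinearMap := (cayleyOn W (-Complex.I)).toLinearMap ∘ₗ (cayleyEquiv hmax).symm.toLinearMap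
      norm_map' := fun x => by
        conv_rhs => rw [← (cayleyEquiv hmax).apply_symm_apply x]
        exact norm_cayley_neg_I hmax.subset ((cayleyEquiv hmax).symm x).2 }
    ((cayleyOn_surjective Complex.neg_I_mul_neg_I hmax).comp (cayleyEquiv hmax).symm.surjective)

lemma cayleyTransform_apply (x : H) :
    cayleyTransform hmax x = cayley (-Complex.I) ((cayleyEquiv hmax).symm x) :=
  rfl

lemma mem_iff_cayleyTransform_cayley_eq (p : H × H) :
    p ∈ W ↔ cayleyTransform hmax (cayley Complex.I p) = cayley (-Complex.I) p := by
  constructor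
  · intro hp
    rw [cayleyTransform_apply, ← cayleyEquiv_apply hmax ⟨p, hp⟩, LinearEquiv.symm_apply_apply]
  · intro hp
    set q := (cayleyEquiv hmax).symm (cayley Complex.I p)
    have hqI : cayley Complex.I q = cayley Complex.I p := (cayleyEquiv hmax).apply_symm_apply _
    rw [cayleyTransform_apply] at hp
    rw [← eq_of_cayley_eq hqI hp]
    exact q.2

end CayleyTransform

end

theorem maximally_isotropic_is_cayley_graph_general
    {H : Type*} [NormedAddCommGroup H] [InnerProductSpace ℂ H] [CompleteSpace H]
    (W : Submodule ℂ (H × H))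
    (hmax : (W : Set (H × H)) =
      {p : H × H | ∀ q ∈ W, ⟪p.2, (q : H × H).1⟫ = ⟪p.1, (q : H × H).2⟫}) :
    ∃ U : H ≃ₗᵢ[ℂ] H,
      (W : Set (H × H)) = {p : H × H | Complex.I • (p.1 + U p.1) = p.2 - U p.2} := by
  refine ⟨cayleyTransform hmax, Set.ext fun p => ?_⟩
  rw [SetLike.mem_coe, mem_iff_cayleyTransform_cayley_eq hmax p]
  simp only [cayley_apply, map_add, map_smul, Set.mem_ofPred_eq]
  constructor <;> intro h <;> linear_combination (norm := module) h

/-- Let `H` be a complex Hilbert space and `W` a closed subspace of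
`H ⊕ H`.  If `W` is maximally isotropic, i.e. `W = W†` where
`W† = {(u₁,u₂) : ⟨u₂, v₁⟩ = ⟨u₁, v₂⟩ for all (v₁,v₂) ∈ W}`, then there is a unitary `U`
on `H` with `W = {(u₁,u₂) : i (I + U) u₁ = (I - U) u₂}`. -/
theorem maximally_isotropic_is_cayley_graph
    {H : Type*} [NormedAddCommGroup H] [InnerProductSpace ℂ H] [CompleteSpace H]
    (W : Submodule ℂ (H × H)) (hclosed : IsClosed (W : Set (H × H)))
    (hmax : (W : Set (H × H)) =
      {p : H × H | ∀ q ∈ W, ⟪p.2, (q : H × H).1⟫ = ⟪p.1, (q : H × H).2⟫}) :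
    ∃ U : H ≃ₗᵢ[ℂ] H,
      (W : Set (H × H)) = {p : H × H | Complex.I • (p.1 + U p.1) = p.2 - U p.2} :=
  maximally_isotropic_is_cayley_graph_general W hmax
end

section
/- Let H be a complex Hilbert space, X a closed subspace of H, V a unitary operator on X such that 1 is not an eigenvalue of V, and U = V ⊕ I_{X⊥} the unitary on H acting as V on X and as the identity on X^⊥. Then for (u₁, u₂) ∈ H ⊕ H, the relation i(I + U)u₁ = (I - U)u₂ holds if and only if u₁ ∈ D(A) and Au₁ = Q u₂, where A = i(I_X + V)(I_X - V)^{-1} is the inverse Cayley transform of V on X (a self-adjoint operator on X with domain Ran(I_X - V)) and Q is the orthogonal projection of H onto X. -/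
/-- Uniqueness of the decomposition along `X` and `Xᗮ`. -/
lemma aux_unique_decomp {H : Type*} [NormedAddCommGroup H] [InnerProductSpace ℂ H]
    (X : Submodule ℂ H) {a b c d : H} (ha : a ∈ X) (hb : b ∈ X)
    (hc : c ∈ Xᗮ) (hd : d ∈ Xᗮ) (h : a + c = b + d) : a = b ∧ c = d := by
  have hmem : a - b ∈ X := X.sub_mem ha hb
  have hmem' : a - b ∈ Xᗮ := by
    have : a - b = d - c := by linear_combination (norm := abel) h
    rw [this]; exact Xᗮ.sub_mem hd hc
  have hz : a - b = 0 := by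
    have := hmem' _ hmem
    simpa [inner_self_eq_zero] using this
  have hab : a = b := by linear_combination (norm := abel) hz
  refine ⟨hab, ?_⟩
  have : a + c = a + d := by rw [hab] at h ⊢; exact h
  exact add_left_cancel this

/-- Let `H` be a complex Hilbert space, `X ⊆ H` a closed subspace,
`V` a unitary on `X` without eigenvalue `1`, and `U = V ⊕ I_{X^⊥}` the unitary on `H`
acting as `V` on `X` and as the identity on `X^⊥`.  Then for `(u₁, u₂) ∈ H ⊕ H`, the
relation `i (I + U) u₁ = (I - U) u₂` holds iff `u₁ ∈ D(A)` and `A u₁ = Q u₂`, where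
`A = i (I_X + V)(I_X - V)⁻¹` is the inverse Cayley transform of `V` (with domain
`Ran (I_X - V)`, so `u₁ = (I_X - V) g` and `A u₁ = i (g + V g)`) and `Q` is the
orthogonal projection of `H` onto `X` (so `A u₁ = Q u₂` iff `u₂ - A u₁ ∈ X^⊥`). -/
theorem direct_sum_unitary_boundary_relation
    {H : Type*} [NormedAddCommGroup H] [InnerProductSpace ℂ H] [CompleteSpace H]
    (X : Submodule ℂ H) (hX : IsClosed (X : Set H))
    (V : X ≃ₗᵢ[ℂ] X) (hV : ∀ x : X, V x = x → x = 0)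
    (U : H ≃ₗᵢ[ℂ] H) (hUX : ∀ x : X, U x = ((V x : X) : H))
    (hUperp : ∀ y ∈ Xᗮ, U y = y) (u₁ u₂ : H) :
    Complex.I • (u₁ + U u₁) = u₂ - U u₂ ↔
      ∃ g : X, u₁ = ((g - V g : X) : H) ∧
        u₂ - ((Complex.I • (g + V g) : X) : H) ∈ Xᗮ := by
  haveI : CompleteSpace X := hX.completeSpace_coe
  constructor
  · intro h
    obtain ⟨x₁, hx₁, y₁, hy₁, hu₁⟩ := X.exists_add_mem_mem_orthogonal u₁
    obtain ⟨x₂, hx₂, y₂, hy₂, hu₂⟩ := X.exists_add_mem_mem_orthogonal u₂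
    set a : X := ⟨x₁, hx₁⟩ with ha_def
    set b : X := ⟨x₂, hx₂⟩ with hb_def
    have hax : (a : H) = x₁ := rfl
    have hbx : (b : H) = x₂ := rfl
    have hU1 : U u₁ = ((V a : X) : H) + y₁ := by
      rw [hu₁, map_add, ← hax, hUX a, hUperp y₁ hy₁]
    have hU2 : U u₂ = ((V b : X) : H) + y₂ := by
      rw [hu₂, map_add, ← hbx, hUX b, hUperp y₂ hy₂]
    rw [hU1, hU2, hu₁, hu₂] at h
    have hsplit : ((Complex.I • (a + V a) : X) : H) + (2 * Complex.I) • y₁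
        = ((b - V b : X) : H) + (0 : H) := by
      push_cast
      linear_combination (norm := module) h
    obtain ⟨h1, h2⟩ := aux_unique_decomp X (Submodule.coe_mem _) (Submodule.coe_mem _)
      (Xᗮ.smul_mem _ hy₁) Xᗮ.zero_mem hsplit
    have hy₁0 : y₁ = 0 := by
      have h2I : (2 * Complex.I) ≠ 0 := by simp [Complex.I_ne_zero]
      rcases smul_eq_zero.mp h2 with h' | h'
      · exact absurd h' h2I
      · exact h'
    have hXeq : (Complex.I • (a + V a) : X) = b - V b := Subtype.coe_injective h1
    set g : X := (-(Complex.I)/2) • (Complex.I • a + b) with hg_def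
    have hVg : V g = (-(Complex.I)/2) • (b - Complex.I • a) := by
      rw [hg_def, map_smul]
      congr 1
      rw [map_add, map_smul]
      linear_combination (norm := module) hXeq
    refine ⟨g, ?_, ?_⟩
    · have : g - V g = a := by
        rw [hg_def, hVg]
        match_scalars <;> ring_nf <;> simp [Complex.I_sq]
      rw [this, hu₁, hy₁0, hax, add_zero]
    · have : (Complex.I • (g + V g) : X) = b := by
        rw [hg_def, hVg]
        match_scalars <;> ring_nf <;> simp [Complex.I_sq]
      rw [this, hu₂, hbx]
      simpa using hy₂
  · rintro ⟨g, hg1, hg2⟩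
    set w : H := u₂ - ((Complex.I • (g + V g) : X) : H) with hw_def
    have hu₂ : u₂ = ((Complex.I • (g + V g) : X) : H) + w := by
      rw [hw_def]; abel
    have hUu1 : U u₁ = ((V g - V (V g) : X) : H) := by
      rw [hg1, hUX (g - V g), map_sub]
    have hUu2 : U u₂ = ((Complex.I • (V g + V (V g)) : X) : H) + w := by
      rw [hu₂, map_add, hUX (Complex.I • (g + V g)), hUperp w hg2, map_smul, map_add]
    rw [hUu1, hUu2, hg1, hu₂]
    push_cast
    module
end

section
/- Let U be a unitary operator on a complex Hilbert space H such that 1 is not an eigenvalue of U. If φ, ψ ∈ H satisfy i(I + U)φ = (I - U)ψ, then φ ∈ Ran(I - U). -/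
/-- Let `U` be unitary on a complex Hilbert space `H` with `1` not an
eigenvalue of `U`.  If `φ, ψ ∈ H` satisfy `i (I + U) φ = (I - U) ψ`, then
`φ ∈ Ran (I - U)`. -/
theorem boundary_relation_mem_range
    {H : Type*} [NormedAddCommGroup H] [InnerProductSpace ℂ H] [CompleteSpace H]
    (U : H ≃ₗᵢ[ℂ] H) (hU : ∀ x : H, U x = x → x = 0) (φ ψ : H)
    (h : Complex.I • (φ + U φ) = ψ - U ψ) :
    ∃ g : H, φ = g - U g := by
  refine ⟨(2 * Complex.I)⁻¹ • (ψ + Complex.I • φ), ?_⟩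
  have hkey : U (ψ + Complex.I • φ) = ψ - Complex.I • φ := by
    have := h
    simp only [smul_add] at this
    rw [map_add, map_smul]
    have hI : Complex.I • U φ = ψ - U ψ - Complex.I • φ := by
      linear_combination (norm := module) this
    rw [hI]; module
  rw [map_smul, hkey]
  rw [eq_comm]
  have h2 : (2 * Complex.I) ≠ 0 := by simp [Complex.I_ne_zero]
  rw [← smul_sub]
  have : ψ + Complex.I • φ - (ψ - Complex.I • φ) = (2 * Complex.I) • φ := by module
  rw [this, smul_smul, inv_mul_cancel₀ h2, one_smul]
end
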